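/- In the 3DSMI instance of dimension 3 with rank-1 edges 0→1, 1→2, 2→3, 3→4, 4→5, 5→0, 6→1, 7→2, 8→0, rank-2 edges 1→8, 2→6, 0→4, 3→7, 5→3, 7→5, and rank-3 edge 0→7, each of the following two-family matchings is blocked by the indicated directed 3-cycle: {(0,1,8),(2,3,7)} by (3,4,5); {(0,1,8),(3,4,5)} by (1,2,6); {(0,1,8),(3,7,5)} by (1,2,6); {(0,4,5),(1,2,6)} by (2,3,7); {(0,4,5),(2,3,7)} by (0,1,8); {(0,7,5),(1,2,6)} by (2,3,7); {(1,2,6),(3,4,5)} by (0,7,5); {(1,2,6),(3,7,5)} by (0,4,5). -/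

import Mathlib

/-- A 3DSMI instance of dimension `n`: a directed graph on a vertex set `V`
partitioned into three genders (men, women, dogs), each of size `n`, where every
edge goes from gender `g` to gender `g+1`, together with a rank function such that
for every vertex of out-degree `k` the ranks of its outgoing edges are exactly
`1, …, k`. -/
structure TDSMI (V : Type) [Fintype V] [DecidableEq V] (n : ℕ) where
  E : V → V → Bool
  r : V → V → ℕ
  gender : V → Fin 3
  gender_card : ∀ g : Fin 3, (Finset.univ.filter fun v => gender v = g).card = n
  edge_gender : ∀ v w : V, E v w → gender w = gender v + 1
  rank_bij : ∀ v : V,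
    (Finset.univ.filter fun w => E v w).image (r v)
      = Finset.Icc 1 (Finset.univ.filter fun w => E v w).card

namespace TDSMI

variable {V : Type} [Fintype V] [DecidableEq V] {n : ℕ}

/-- A family: a directed 3-cycle `a → b → c → a`. -/
def IsFamily (G : TDSMI V n) (a b c : V) : Prop :=
  G.E a b ∧ G.E b c ∧ G.E c a

/-- `v` is one of the vertices of the triple `t`. -/
def MemTriple (v : V) (t : V × V × V) : Prop :=
  v = t.1 ∨ v = t.2.1 ∨ v = t.2.2

/-- A matching: a set of pairwise vertex-disjoint families. -/
def IsMatching (G : TDSMI V n) (F : Finset (V × V × V)) : Prop :=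
  (∀ t ∈ F, G.IsFamily t.1 t.2.1 t.2.2) ∧
  ∀ t ∈ F, ∀ t' ∈ F, t ≠ t' → ∀ v : V, ¬ (MemTriple v t ∧ MemTriple v t')

/-- `w` is the vertex that the edge leaving `v` inside its family of `F` points to. -/
def MatchedTo (F : Finset (V × V × V)) (v w : V) : Prop :=
  ∃ t ∈ F, (t.1 = v ∧ t.2.1 = w) ∨ (t.2.1 = v ∧ t.2.2 = w) ∨ (t.2.2 = v ∧ t.1 = w)

/-- `r(v,w) < R_F(v)`: the rank of the edge `v → w` is smaller than the rank of `v` in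
the matching `F` (if `v` is in no family of `F`, its rank is `+∞` and this holds
vacuously). -/
def Prefers (G : TDSMI V n) (F : Finset (V × V × V)) (v w : V) : Prop :=
  ∀ u : V, MatchedTo F v u → G.r v w < G.r v u

/-- The directed 3-cycle `(a, b, c)` blocks the matching `F`. -/
def Blocks (G : TDSMI V n) (F : Finset (V × V × V)) (a b c : V) : Prop :=
  G.IsFamily a b c ∧ G.Prefers F a b ∧ G.Prefers F b c ∧ G.Prefers F c a

/-- A matching is weakly stable if no directed 3-cycle blocks it. -/
def WeaklyStable (G : TDSMI V n) (F : Finset (V × V × V)) : Prop :=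
  ∀ a b c : V, ¬ G.Blocks F a b c

end TDSMI

def rank1Edges : List (ℕ × ℕ) := [(0,1),(1,2),(2,3),(3,4),(4,5),(5,0),(6,1),(7,2),(8,0)]
def rank2Edges : List (ℕ × ℕ) := [(1,8),(2,6),(0,4),(3,7),(5,3),(7,5)]
def rank3Edges : List (ℕ × ℕ) := [(0,7)]

/-- The 3DSMI instance of dimension 3 from Fig. 3 of the paper. -/
def G3 : TDSMI (Fin 9) 3 where
  E v w := decide ((v.val, w.val) ∈ rank1Edges ++ rank2Edges ++ rank3Edges)
  r v w :=
    if (v.val, w.val) ∈ rank1Edges then 1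
    else if (v.val, w.val) ∈ rank2Edges then 2
    else if (v.val, w.val) ∈ rank3Edges then 3
    else 0
  gender v := ⟨v.val % 3, Nat.mod_lt _ (by norm_num)⟩
  gender_card := by decide
  edge_gender := by decide
  rank_bij := by decide

abbrev T9 := Fin 9 × Fin 9 × Fin 9

namespace TDSMI

variable {V : Type} [Fintype V] [DecidableEq V] {n : ℕ}

instance (G : TDSMI V n) (a b c : V) : Decidable (G.IsFamily a b c) :=
  inferInstanceAs (Decidable (_ ∧ _ ∧ _))

instance (v : V) (t : V × V × V) : Decidable (MemTriple v t) :=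
  inferInstanceAs (Decidable (_ ∨ _ ∨ _))

instance (G : TDSMI V n) (F : Finset (V × V × V)) : Decidable (G.IsMatching F) :=
  instDecidableAnd

instance (F : Finset (V × V × V)) (v w : V) : Decidable (MatchedTo F v w) :=
  inferInstanceAs (Decidable (∃ t ∈ F, _))

instance (G : TDSMI V n) (F : Finset (V × V × V)) (v w : V) : Decidable (G.Prefers F v w) :=
  inferInstanceAs (Decidable (∀ u, MatchedTo F v u → _))

instance (G : TDSMI V n) (F : Finset (V × V × V)) (a b c : V) :
    Decidable (G.Blocks F a b c) :=
  inferInstanceAs (Decidable (_ ∧ _ ∧ _ ∧ _))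

end TDSMI

/-- Each of the eight listed two-family matchings is blocked by the indicated
directed 3-cycle. -/
theorem stmt_14 :
    (G3.IsMatching {((0,1,8) : T9), ((2,3,7) : T9)} ∧
      G3.Blocks {((0,1,8) : T9), ((2,3,7) : T9)} 3 4 5) ∧
    (G3.IsMatching {((0,1,8) : T9), ((3,4,5) : T9)} ∧
      G3.Blocks {((0,1,8) : T9), ((3,4,5) : T9)} 1 2 6) ∧
    (G3.IsMatching {((0,1,8) : T9), ((3,7,5) : T9)} ∧
      G3.Blocks {((0,1,8) : T9), ((3,7,5) : T9)} 1 2 6) ∧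
    (G3.IsMatching {((0,4,5) : T9), ((1,2,6) : T9)} ∧
      G3.Blocks {((0,4,5) : T9), ((1,2,6) : T9)} 2 3 7) ∧
    (G3.IsMatching {((0,4,5) : T9), ((2,3,7) : T9)} ∧
      G3.Blocks {((0,4,5) : T9), ((2,3,7) : T9)} 0 1 8) ∧
    (G3.IsMatching {((0,7,5) : T9), ((1,2,6) : T9)} ∧
      G3.Blocks {((0,7,5) : T9), ((1,2,6) : T9)} 2 3 7) ∧
    (G3.IsMatching {((1,2,6) : T9), ((3,4,5) : T9)} ∧
      G3.Blocks {((1,2,6) : T9), ((3,4,5) : T9)} 0 7 5) ∧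
    (G3.IsMatching {((1,2,6) : T9), ((3,7,5) : T9)} ∧
      G3.Blocks {((1,2,6) : T9), ((3,7,5) : T9)} 0 4 5) := by
  decide +kernel
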